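/- Define q^{(1,n)}_{-n+j} as the coefficient of x^{-n+j} in the Laurent expansion of e^x/(e^x-1)^n. Then for every n \in \mathbb{Z} and j > 0: q^{(1,n)}_{-n+j} = -(1/j)[ (B_j/j!)(n-j-1) + \sum_{i=1}^{j-1} i \, q^{(1,n+i-j)}_{-n+j} \, q^{(1,-n-i+j+2)}_{n-2} ], where B_j is the j-th Bernoulli number with the convention B_1 = 1/2 (i.e., B_j/j! is the coefficient of x^{j-1} in e^x/(e^x-1)). -/

import Mathlib

/-- `E = e^x` as a formal Laurent series over `ℚ`. -/
noncomputable def E : LaurentSeries ℚ := HahnSeries.ofPowerSeries ℤ ℚ (PowerSeries.exp ℚ)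

/-- `q n k` is the coefficient of `x^k` in the Laurent expansion of `e^x/(e^x-1)^n`. -/
noncomputable def q (n k : ℤ) : ℚ := (E * ((E - 1) ^ n)⁻¹).coeff k

/-!
Write `e^x - 1 = x u(x)` with `u` a unit power series, so that `q(n, -n + i) = [x^i] e^x u^(-n)`.
Lagrange inversion for the substitution `y = e^x - 1`, whose inverse is `x = log(1 + y)`, turns
this into `q(n, k) = [y^i] w^(-k-1)` for `i = n + k`, where `w(y) = log(1 + y)/y`.
In these coordinates the terms of the recursion are `i [y^i] w^a · [y^(j-i)] w^b` with
`a + b = -j`, and their sum over `0 ≤ i ≤ j` is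
`[y^j] (y (w^a)' w^b) = a [y^j] (y w' w^(-j-1))`.
Since `y (w^(-j))' = -j y w' w^(-j-1)`, the sum is `-a [y^j] w^(-j)`, and by Lagrange inversion
again `[y^j] w^(-j) = [x^j] x e^x / (e^x - 1) = B_j / j!`.
-/

theorem Units.val_zpow_mul_val_zpow {M : Type*} [Monoid M] (U : Mˣ) (a b : ℤ) :
    (↑(U ^ a) : M) * ↑(U ^ b) = ↑(U ^ (a + b)) := by
  rw [← Units.val_mul, ← zpow_add]

namespace PowerSeries

section CommRing

variable {R : Type*} [CommRing R]

theorem coeff_X_mul_derivative (f : R⟦X⟧) (n : ℕ) :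
    coeff n (X * d⁄dX R f) = n * coeff n f := by
  cases n with
  | zero => simp
  | succ n => rw [coeff_succ_X_mul, coeff_derivative]; push_cast; ring

theorem derivative_val_zpow (U : R⟦X⟧ˣ) (k : ℤ) :
    d⁄dX R ↑(U ^ k) = k * ↑(U ^ (k - 1)) * d⁄dX R ↑U := by
  induction k using Int.induction_on with
  | zero => simp
  | succ k ih =>
    have h := Units.val_zpow_mul_val_zpow U 1 (k - 1)
    rw [zpow_one, add_sub_cancel] at h
    rw [zpow_add_one, Units.val_mul, Derivation.leibniz, ih, add_sub_cancel_right, smul_eq_mul,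
      smul_eq_mul]
    push_cast
    linear_combination (↑k * d⁄dX R ↑U) * h
  | pred k ih =>
    have h₁ : (↑(U ^ (-k : ℤ)) : R⟦X⟧) * ↑U⁻¹ ^ 2 = ↑(U ^ (-k - 1 - 1 : ℤ)) := by
      rw [← Units.val_pow_eq_pow_val, ← Units.val_mul]; congr 1; group
    have h₂ : (↑U⁻¹ : R⟦X⟧) * ↑(U ^ (-k - 1 : ℤ)) = ↑(U ^ (-k - 1 - 1 : ℤ)) := by
      rw [← Units.val_mul]; congr 1; group
    rw [zpow_sub_one, Units.val_mul, Derivation.leibniz, ih, derivative_inv, smul_eq_mul,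
      smul_eq_mul]
    push_cast
    linear_combination (-d⁄dX R ↑U) * h₁ + (-k * d⁄dX R ↑U) * h₂

theorem constantCoeff_val_zpow {U : R⟦X⟧ˣ} (hU : constantCoeff (U : R⟦X⟧) = 1) (k : ℤ) :
    constantCoeff (↑(U ^ k) : R⟦X⟧) = 1 := by
  have h : Units.map (constantCoeff (R := R)).toMonoidHom U = 1 := Units.ext hU
  change ((Units.map (constantCoeff (R := R)).toMonoidHom (U ^ k) : Rˣ) : R) = 1
  rw [map_zpow, h, one_zpow, Units.val_one]

end CommRing

theorem X_mul_Unit_of_divided_by_X_pow_order {K : Type*} [Field K] {f : K⟦X⟧}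
    (hf : f.order = 1) : X * (↑(Unit_of_divided_by_X_pow_order f) : K⟦X⟧) = f := by
  have hf0 : f ≠ 0 := by
    rintro rfl
    simp at hf
  rw [Unit_of_divided_by_X_pow_order_nonzero hf0]
  simpa [hf] using X_pow_order_mul_divXPowOrder (f := f)

section CharZero

variable {K : Type*} [Field K] [CharZero K]

theorem coeff_X_mul_derivative_val_zpow_mul_val_zpow (W : K⟦X⟧ˣ) {a b : ℤ} {j : ℕ}
    (hj : j ≠ 0) (hab : a + b = -j) :
    coeff j (X * d⁄dX K (↑(W ^ a) : K⟦X⟧) * (↑(W ^ b) : K⟦X⟧)) =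
      -a * coeff j (↑(W ^ (-j : ℤ)) : K⟦X⟧) := by
  set Y : K⟦X⟧ := (↑(W ^ (-j - 1 : ℤ)) : K⟦X⟧) * (X * d⁄dX K ↑W) with hY
  have hYa : X * d⁄dX K (↑(W ^ a) : K⟦X⟧) * (↑(W ^ b) : K⟦X⟧) = C (a : K) * Y := by
    have h := Units.val_zpow_mul_val_zpow W (a - 1) b
    rw [show a - 1 + b = -j - 1 by omega] at h
    rw [derivative_val_zpow, ← map_intCast (C (R := K))]
    linear_combination (C (a : K) * X * d⁄dX K ↑W) * h - C (a : K) * hY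
  have hYj : X * d⁄dX K (↑(W ^ (-j : ℤ)) : K⟦X⟧) = C (-j : K) * Y := by
    rw [derivative_val_zpow, map_neg, map_natCast, hY]
    push_cast
    ring
  have hcoeff := congrArg (coeff j) hYj
  rw [coeff_X_mul_derivative, coeff_C_mul] at hcoeff
  rw [hYa, coeff_C_mul]
  apply mul_left_cancel₀ (Nat.cast_ne_zero.mpr hj : (j : K) ≠ 0)
  linear_combination (a : K) * hcoeff

theorem sum_range_mul_coeff_val_zpow_mul_coeff_val_zpow (W : K⟦X⟧ˣ) {a b : ℤ} {j : ℕ}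
    (hj : j ≠ 0) (hab : a + b = -j) :
    ∑ i ∈ Finset.range (j + 1),
        (i : K) * coeff i (↑(W ^ a) : K⟦X⟧) * coeff (j - i) (↑(W ^ b) : K⟦X⟧) =
      -a * coeff j (↑(W ^ (-j : ℤ)) : K⟦X⟧) := by
  rw [← coeff_X_mul_derivative_val_zpow_mul_val_zpow W hj hab, coeff_mul,
    Finset.Nat.sum_antidiagonal_eq_sum_range_succ_mk]
  simp only [coeff_X_mul_derivative]

theorem sum_Icc_mul_coeff_val_zpow_mul_coeff_val_zpow_add {W : K⟦X⟧ˣ}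
    (hW : constantCoeff (W : K⟦X⟧) = 1) {a b : ℤ} {j : ℕ} (hj : j ≠ 0)
    (hab : a + b = -j) :
    ∑ i ∈ Finset.Icc 1 (j - 1),
        (i : K) * coeff i (↑(W ^ a) : K⟦X⟧) * coeff (j - i) (↑(W ^ b) : K⟦X⟧) +
      j * coeff j (↑(W ^ a) : K⟦X⟧) = -a * coeff j (↑(W ^ (-j : ℤ)) : K⟦X⟧) := by
  have hIcc : Finset.Ico 1 j = Finset.Icc 1 (j - 1) := by ext; simp; omega
  rw [← sum_range_mul_coeff_val_zpow_mul_coeff_val_zpow W hj hab, Finset.sum_range_succ,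
    Nat.sub_self, coeff_zero_eq_constantCoeff_apply, constantCoeff_val_zpow hW, mul_one,
    Finset.range_eq_Ico, Finset.sum_eq_sum_Ico_succ_bot (Nat.pos_of_ne_zero hj), Nat.cast_zero,
    zero_mul, zero_mul, zero_add, hIcc]

theorem coeff_derivative_X_mul_mul_val_zpow (u : K⟦X⟧ˣ) (m : ℕ) :
    coeff m (d⁄dX K (X * (u : K⟦X⟧)) * (↑(u ^ (-(m + 1) : ℤ)) : K⟦X⟧)) =
      if m = 0 then 1 else 0 := by
  -- `(X u)' u^(-m-1) = u^(-m) - X (u^(-m))' / m`, and `[X^m] X f' = m [X^m] f`.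
  have hsplit : d⁄dX K (X * (u : K⟦X⟧)) * (↑(u ^ (-(m + 1) : ℤ)) : K⟦X⟧) =
      (↑(u ^ (-m : ℤ)) : K⟦X⟧) + X * (d⁄dX K ↑u * (↑(u ^ (-(m + 1) : ℤ)) : K⟦X⟧)) := by
    have h := Units.val_zpow_mul_val_zpow u 1 (-(m + 1))
    rw [zpow_one, show (1 + -(m + 1) : ℤ) = -m by ring] at h
    rw [Derivation.leibniz, derivative_X, smul_eq_mul, smul_eq_mul, ← h]
    ring
  have hderiv : X * d⁄dX K (↑(u ^ (-m : ℤ)) : K⟦X⟧) =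
      C (-m : K) * (X * (d⁄dX K ↑u * (↑(u ^ (-(m + 1) : ℤ)) : K⟦X⟧))) := by
    rw [derivative_val_zpow, map_neg, map_natCast, show (-m - 1 : ℤ) = -(m + 1) by ring]
    push_cast
    ring
  rw [hsplit, map_add]
  split_ifs with hm
  · subst hm
    simp
  · have hcoeff := congrArg (coeff m) hderiv
    rw [coeff_X_mul_derivative, coeff_C_mul] at hcoeff
    apply mul_left_cancel₀ (Nat.cast_ne_zero.mpr hm : (m : K) ≠ 0)
    linear_combination hcoeff

/-- Lagrange inversion: for `y = X u`, the residue of `H(y) y' / y^(i+1)` equals that of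
`H(X) / X^(i+1)`. -/
theorem coeff_subst_X_mul_mul_derivative_mul_val_zpow (u : K⟦X⟧ˣ) (H : K⟦X⟧) (i : ℕ) :
    coeff i (H.subst (X * (u : K⟦X⟧)) * d⁄dX K (X * (u : K⟦X⟧)) *
      (↑(u ^ (-(i + 1) : ℤ)) : K⟦X⟧)) = coeff i H := by
  set y : K⟦X⟧ := X * (u : K⟦X⟧) with hy_def
  have hy : HasSubst y := HasSubst.X'.mul_left
  have hsplit (G : K⟦X⟧) (k : ℕ) :
      G.subst y * d⁄dX K y * (↑(u ^ (-(k + 1) : ℤ)) : K⟦X⟧) =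
      X * ((mk fun p => coeff (p + 1) G).subst y * d⁄dX K y * (↑(u ^ (-k : ℤ)) : K⟦X⟧)) +
        C (constantCoeff G) * (d⁄dX K y * (↑(u ^ (-(k + 1) : ℤ)) : K⟦X⟧)) := by
    have h := Units.val_zpow_mul_val_zpow u 1 (-(k + 1))
    rw [zpow_one, show (1 + -(k + 1) : ℤ) = -k by ring] at h
    conv_lhs => rw [eq_X_mul_shift_add_const G]
    rw [subst_add hy, subst_mul hy, subst_X hy, subst_C,
      show (MvPowerSeries.C (constantCoeff G) : K⟦X⟧) = C (constantCoeff G) from rfl]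
    linear_combination (X * (mk fun p => coeff (p + 1) G).subst y * d⁄dX K y) * h
  induction i generalizing H with
  | zero =>
    have hbase := coeff_derivative_X_mul_mul_val_zpow u 0
    rw [← hy_def, if_pos rfl] at hbase
    rw [hsplit, map_add, coeff_zero_X_mul, coeff_C_mul, hbase, zero_add, mul_one,
      coeff_zero_eq_constantCoeff_apply]
  | succ i ih =>
    have hbase := coeff_derivative_X_mul_mul_val_zpow u (i + 1)
    rw [← hy_def, if_neg (Nat.succ_ne_zero i)] at hbase
    rw [hsplit, map_add, coeff_succ_X_mul, coeff_C_mul, hbase, mul_zero, add_zero, Nat.cast_succ,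
      ih, coeff_mk]

end CharZero

section LogExp

variable {A : Type*} [CommRing A] [Algebra ℚ A]

theorem derivative_log_mul_one_add_X : d⁄dX A (log A) * (1 + X) = 1 := by
  ext (_ | n)
  · simp [deriv_log]
  · rw [mul_add, mul_one, map_add, coeff_succ_mul_X, deriv_log, coeff_mk, coeff_mk, coeff_one,
      if_neg n.succ_ne_zero, ← map_add, pow_succ, mul_neg_one, neg_add_cancel, map_zero]

theorem log_subst_exp_sub_one [IsAddTorsionFree A] : (log A).subst (exp A - 1) = X := by
  have hy := HasSubst.exp_sub_one (A := A)
  refine derivative.ext ?_ ?_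
  · have h := congrArg (subst (exp A - 1)) (derivative_log_mul_one_add_X (A := A))
    rw [subst_mul hy, subst_add hy, subst_X hy, ← coe_substAlgHom hy, map_one,
      coe_substAlgHom hy, add_sub_cancel] at h
    rw [derivative_subst hy, map_sub, derivative_exp, derivative_one, sub_zero, h, derivative_X]
  · rw [constantCoeff_X]
    exact constantCoeff_subst_eq_zero
      (by rw [map_sub, map_one, ← constantCoeff_eq, constantCoeff_exp, sub_self]) _
      constantCoeff_log

end LogExp

end PowerSeries

open PowerSeries

theorem HahnSeries.ofPowerSeries_val_zpow {K : Type*} [Field K] (U : K⟦X⟧ˣ) (k : ℤ) :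
    ofPowerSeries ℤ K ↑(U ^ k) = ofPowerSeries ℤ K ↑U ^ k := by
  change ((Units.map (ofPowerSeries ℤ K).toMonoidHom (U ^ k) : (HahnSeries ℤ K)ˣ) :
    HahnSeries ℤ K) = _
  rw [map_zpow, Units.val_zpow_eq_zpow_val]
  rfl

noncomputable def expSubOneDivX : ℚ⟦X⟧ˣ := Unit_of_divided_by_X_pow_order (exp ℚ - 1)

noncomputable def logOneAddXDivX : ℚ⟦X⟧ˣ := Unit_of_divided_by_X_pow_order (log ℚ)

theorem X_mul_expSubOneDivX : X * (↑expSubOneDivX : ℚ⟦X⟧) = exp ℚ - 1 :=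
  X_mul_Unit_of_divided_by_X_pow_order (order_eq_nat.mpr ⟨by simp, fun i hi => by
    obtain rfl : i = 0 := by omega
    simp⟩)

theorem X_mul_logOneAddXDivX : X * (↑logOneAddXDivX : ℚ⟦X⟧) = log ℚ :=
  X_mul_Unit_of_divided_by_X_pow_order order_log

theorem constantCoeff_logOneAddXDivX : constantCoeff (↑logOneAddXDivX : ℚ⟦X⟧) = 1 := by
  rw [← coeff_zero_eq_constantCoeff_apply, ← coeff_succ_X_mul, X_mul_logOneAddXDivX,
    coeff_one_log]

theorem subst_logOneAddXDivX :
    (↑logOneAddXDivX : ℚ⟦X⟧).subst (exp ℚ - 1) = ↑expSubOneDivX⁻¹ := by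
  have hy := HasSubst.exp_sub_one (A := ℚ)
  have h := congrArg (subst (exp ℚ - 1)) X_mul_logOneAddXDivX
  rw [subst_mul hy, subst_X hy, log_subst_exp_sub_one] at h
  refine (Units.inv_eq_of_mul_eq_one_right ?_).symm
  apply mul_left_cancel₀ (X_ne_zero (R := ℚ))
  rw [← mul_assoc, X_mul_expSubOneDivX, h, mul_one]

theorem subst_val_logOneAddXDivX_zpow (k : ℤ) :
    (↑(logOneAddXDivX ^ k) : ℚ⟦X⟧).subst (exp ℚ - 1) = ↑(expSubOneDivX ^ (-k)) := by
  set φ : ℚ⟦X⟧ →* ℚ⟦X⟧ := (substAlgHom (HasSubst.exp_sub_one (A := ℚ))).toMonoidHom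
  have hφ : Units.map φ logOneAddXDivX = expSubOneDivX⁻¹ :=
    Units.ext (by simpa [φ, coe_substAlgHom] using subst_logOneAddXDivX)
  rw [← coe_substAlgHom (HasSubst.exp_sub_one (A := ℚ))]
  change (↑(Units.map φ (logOneAddXDivX ^ k)) : ℚ⟦X⟧) = _
  rw [map_zpow, hφ, inv_zpow', zpow_neg]

theorem coeff_val_logOneAddXDivX_zpow (m : ℤ) (i : ℕ) :
    coeff i (↑(logOneAddXDivX ^ (m - 1)) : ℚ⟦X⟧) =
      coeff i (exp ℚ * (↑(expSubOneDivX ^ (-(m + i))) : ℚ⟦X⟧)) := by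
  have h := Units.val_zpow_mul_val_zpow expSubOneDivX (-(m - 1)) (-(i + 1))
  rw [show -(m - 1) + -(i + 1) = -(m + i) by ring] at h
  rw [← coeff_subst_X_mul_mul_derivative_mul_val_zpow expSubOneDivX, X_mul_expSubOneDivX,
    subst_val_logOneAddXDivX_zpow, map_sub, derivative_exp, derivative_one, sub_zero, ← h]
  ring_nf

theorem exp_mul_val_expSubOneDivX_inv :
    exp ℚ * ↑expSubOneDivX⁻¹ = bernoulli'PowerSeries ℚ := by
  have h := bernoulli'PowerSeries_mul_exp_sub_one ℚ
  rw [← X_mul_expSubOneDivX, mul_left_comm] at h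
  rw [← mul_left_cancel₀ X_ne_zero h, mul_assoc, Units.mul_inv, mul_one]

theorem coeff_val_logOneAddXDivX_zpow_neg (j : ℕ) :
    coeff j (↑(logOneAddXDivX ^ (-j : ℤ)) : ℚ⟦X⟧) = bernoulli' j / j.factorial := by
  rw [show (-j : ℤ) = 1 - j - 1 by ring, coeff_val_logOneAddXDivX_zpow,
    show -(1 - j + j : ℤ) = -1 by ring, zpow_neg_one, exp_mul_val_expSubOneDivX_inv,
    bernoulli'PowerSeries, coeff_mk, Algebra.algebraMap_self, RingHom.id_apply]

theorem E_sub_one_eq_single_mul :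
    E - 1 = HahnSeries.single 1 1 * HahnSeries.ofPowerSeries ℤ ℚ ↑expSubOneDivX := by
  rw [E, ← HahnSeries.ofPowerSeries_X, ← map_one (HahnSeries.ofPowerSeries ℤ ℚ),
    ← map_sub, ← map_mul, X_mul_expSubOneDivX]

theorem E_mul_inv_E_sub_one_zpow (n : ℤ) :
    E * ((E - 1) ^ n)⁻¹ = HahnSeries.single (-n) 1 *
      HahnSeries.ofPowerSeries ℤ ℚ (exp ℚ * (↑(expSubOneDivX ^ (-n)) : ℚ⟦X⟧)) := by
  rw [E_sub_one_eq_single_mul, ← zpow_neg, mul_zpow, ← RatFunc.single_zpow, map_mul,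
    HahnSeries.ofPowerSeries_val_zpow, E]
  ring

theorem q_eq_coeff (n : ℤ) (i : ℕ) :
    q n (-n + i) = coeff i (exp ℚ * (↑(expSubOneDivX ^ (-n)) : ℚ⟦X⟧)) := by
  rw [q, E_mul_inv_E_sub_one_zpow, add_comm, HahnSeries.coeff_single_mul_add, one_mul,
    HahnSeries.ofPowerSeries_apply_coeff]

theorem q_eq_coeff_val_logOneAddXDivX_zpow {n k : ℤ} {i : ℕ} (h : n + k = i) :
    q n k = coeff i (↑(logOneAddXDivX ^ (-k - 1)) : ℚ⟦X⟧) := by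
  rw [coeff_val_logOneAddXDivX_zpow, show -(-k + i) = -n by omega, ← q_eq_coeff,
    show -n + i = k by omega]

/-- The recursion for Bernoulli-type numbers: for every `n : ℤ` and `j > 0`,
`q^{(1,n)}_{-n+j} = -(1/j)[(B_j/j!)(n-j-1) + ∑_{i=1}^{j-1} i q^{(1,n+i-j)}_{-n+j} q^{(1,-n-i+j+2)}_{n-2}]`,
where `B_j = bernoulli' j` is the `j`-th Bernoulli number with the convention `B_1 = 1/2`. -/
theorem stmt19 (n : ℤ) (j : ℕ) (hj : 0 < j) :
    q n (-n + j) =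
      -(1 / (j : ℚ)) *
        ((bernoulli' j / (Nat.factorial j : ℚ)) * ((n : ℚ) - (j : ℚ) - 1) +
          ∑ i ∈ Finset.Icc 1 (j - 1),
            (i : ℚ) * q (n + (i : ℤ) - (j : ℤ)) (-n + j) * q (-n - (i : ℤ) + (j : ℤ) + 2) (n - 2)) := by
  have hconv := sum_Icc_mul_coeff_val_zpow_mul_coeff_val_zpow_add constantCoeff_logOneAddXDivX
    hj.ne' (a := n - j - 1) (b := 1 - n) (by ring)
  rw [coeff_val_logOneAddXDivX_zpow_neg] at hconv
  have hF (i : ℕ) :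
      q (n + i - j) (-n + j) = coeff i (↑(logOneAddXDivX ^ (n - j - 1)) : ℚ⟦X⟧) := by
    rw [q_eq_coeff_val_logOneAddXDivX_zpow (by ring), show -(-n + j) - 1 = n - j - 1 by ring]
  have hG (i : ℕ) (hij : i ≤ j) :
      q (-n - i + j + 2) (n - 2) = coeff (j - i) (↑(logOneAddXDivX ^ (1 - n)) : ℚ⟦X⟧) := by
    rw [q_eq_coeff_val_logOneAddXDivX_zpow (i := j - i) (by push_cast [hij]; ring),
      show -(n - 2) - 1 = 1 - n by ring]
  have hlhs := hF j
  rw [add_sub_cancel_right] at hlhs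
  rw [hlhs, Finset.sum_congr rfl fun i hi => by rw [hF, hG i (by grind)]]
  have hj' : (j : ℚ) ≠ 0 := by positivity
  push_cast at hconv
  linear_combination (norm := skip) (1 / (j : ℚ)) * hconv
  field_simp
  ring
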